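/- Let m, n be positive integers, let 1 ≤ k ≤ m and 1 ≤ s ≤ q < ∞, and set ρ = msq/(kq + (m−k)s). Then for every scalar matrix a = (a_i)_{i ∈ M(m,n)} one has (Σ_{i ∈ M(m,n)} |a_i|^ρ)^{1/ρ} ≤ ∏_{S ∈ P_k(m)} ( Σ_{i_S} ( Σ_{i_Ŝ} |a_i|^q )^{s/q} )^{(1/s)·(1/C(m,k))}, where for each S ⊆ {1,...,m} with card(S)=k, Σ_{i_S} ranges over the indices i_j with j ∈ S (each from 1 to n), Σ_{i_Ŝ} ranges over the indices i_j with j ∉ S, and C(m,k) is the binomial coefficient m choose k. -/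

import Mathlib

/-!
Write `F i = ‖a i‖`, `N = C(m, k)` and, for `S ∈ P_k(m)`, let `p_S` be the exponent vector equal
to `s` on `S` and to `q` off `S`. Each coordinate `j` lies in `C(m-1, k-1) = kN/m` of the sets `S`,
so `∑_S (1/N) / p_S(j) = 1/ρ` for every `j`, and Hölder's inequality for mixed sums gives
`‖F‖_ρ ≤ ∏_S ‖F‖_{p_S}^{1/N}`. Since `s ≤ q`, Minkowski's inequality lets every `q`-sum be moved
inside every `s`-sum, so `‖F‖_{p_S}` is at most the mixed norm with the `S`-coordinates outermost,
which is the factor indexed by `S` on the right.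
-/

open scoped NNReal ENNReal
open Finset

theorem NNReal.sum_prod_le_prod_Lp {ι α : Type*} [Fintype α] (T : Finset ι) (f : ι → α → ℝ≥0)
    {p : ι → ℝ} (hp : ∀ t ∈ T, 0 < p t) (hpT : ∑ t ∈ T, 1 / p t = 1) :
    ∑ x, ∏ t ∈ T, f t x ≤ ∏ t ∈ T, (∑ x, f t x ^ p t) ^ (1 / p t) := by
  let _ : MeasurableSpace α := ⊤
  have h := ENNReal.lintegral_prod_norm_pow_le (μ := MeasureTheory.Measure.count) T
    (f := fun t x => ((f t x ^ p t : ℝ≥0) : ℝ≥0∞)) (fun _ _ => measurable_from_top.aemeasurable)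
    hpT (fun t ht => (one_div_pos.2 (hp t ht)).le)
  simp only [MeasureTheory.lintegral_count, tsum_fintype] at h
  rw [← ENNReal.coe_le_coe]
  convert h using 1
  · push_cast
    refine sum_congr rfl fun x _ => prod_congr rfl fun t ht => ?_
    rw [← ENNReal.coe_rpow_of_nonneg _ (one_div_pos.2 (hp t ht)).le,
      NNReal.rpow_inv_rpow_self (hp t ht).ne']
  · push_cast
    refine prod_congr rfl fun t ht => ?_
    rw [← ENNReal.ofNNReal_finsetSum, ENNReal.coe_rpow_of_nonneg _ (one_div_pos.2 (hp t ht)).le]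

theorem NNReal.Lp_sum_le_sum_Lp {α β : Type*} [Fintype α] (u : Finset β) (v : α → β → ℝ≥0)
    {r : ℝ} (hr : 1 ≤ r) :
    (∑ x, (∑ y ∈ u, v x y) ^ r) ^ (1 / r) ≤ ∑ y ∈ u, (∑ x, v x y ^ r) ^ (1 / r) := by
  induction u using Finset.cons_induction with
  | empty => simp [NNReal.zero_rpow (by positivity : r ≠ 0), (by positivity : r ≠ 0)]
  | cons b u hb ih =>
    simp only [sum_cons]
    calc _ ≤ (∑ x, v x b ^ r) ^ (1 / r) + (∑ x, (∑ y ∈ u, v x y) ^ r) ^ (1 / r) :=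
          NNReal.Lp_add_le _ _ _ hr
      _ ≤ _ := by gcongr

theorem NNReal.rpow_sum_of_nonneg {ι : Type*} (x : ℝ≥0) {s : Finset ι} {f : ι → ℝ}
    (hf : ∀ i ∈ s, 0 ≤ f i) : x ^ (∑ i ∈ s, f i) = ∏ i ∈ s, x ^ f i :=
  NNReal.coe_injective <| by push_cast; exact Real.rpow_sum_of_nonneg x.2 hf

section MixedNorm

variable {α : Type*} [Fintype α]

noncomputable def mixedNorm : {m : ℕ} → (Fin m → ℝ) → ((Fin m → α) → ℝ≥0) → ℝ≥0
  | 0, _, f => f ![]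
  | _ + 1, p, f => (∑ x, mixedNorm (Fin.tail p) (fun i => f (Fin.cons x i)) ^ p 0) ^ (1 / p 0)

theorem mixedNorm_rpow {m : ℕ} (p : Fin m → ℝ) (f : (Fin m → α) → ℝ≥0) {c : ℝ} (hc : c ≠ 0) :
    mixedNorm (fun j => p j / c) (fun i => f i ^ c) = mixedNorm p f ^ c := by
  induction m with
  | zero => rfl
  | succ m ih =>
    calc mixedNorm (fun j => p j / c) (fun i => f i ^ c)
        = (∑ x, (mixedNorm (Fin.tail p) (fun i => f (Fin.cons x i)) ^ c) ^ (p 0 / c)) ^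
            (1 / (p 0 / c)) := by
          simp only [mixedNorm, ← ih]; rfl
      _ = mixedNorm p f ^ c := by
          simp only [mixedNorm, ← NNReal.rpow_mul, mul_div_cancel₀ _ hc]
          congr 1
          field_simp

theorem sum_prod_le_prod_mixedNorm {ι : Type*} (T : Finset ι) {m : ℕ}
    (f : ι → (Fin m → α) → ℝ≥0) (p : ι → Fin m → ℝ) (hp : ∀ t ∈ T, ∀ j, 0 < p t j)
    (hpT : ∀ j, ∑ t ∈ T, 1 / p t j = 1) :
    ∑ i, ∏ t ∈ T, f t i ≤ ∏ t ∈ T, mixedNorm (p t) (f t) := by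
  induction m with
  | zero => simp [mixedNorm, Subsingleton.elim _ ![]]
  | succ m ih =>
    calc ∑ i, ∏ t ∈ T, f t i
        = ∑ x, ∑ i, ∏ t ∈ T, f t (Fin.cons x i) := by
          rw [← Fintype.sum_prod_type']
          exact (Fintype.sum_equiv (Fin.consEquiv fun _ => α) _ _ fun _ => rfl).symm
      _ ≤ ∑ x, ∏ t ∈ T, mixedNorm (Fin.tail (p t)) (fun i => f t (Fin.cons x i)) :=
          sum_le_sum fun x _ => ih _ _ (fun t ht j => hp t ht j.succ) (fun j => hpT j.succ)
      _ ≤ ∏ t ∈ T, mixedNorm (p t) (f t) :=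
          NNReal.sum_prod_le_prod_Lp T _ (fun t ht => hp t ht 0) (hpT 0)

theorem Lp_le_prod_mixedNorm_rpow {ι : Type*} (T : Finset ι) {m : ℕ} (p : ι → Fin m → ℝ)
    (θ : ι → ℝ) {ρ : ℝ} (hρ : 0 < ρ) (hp : ∀ t ∈ T, ∀ j, 0 < p t j) (hθ : ∀ t ∈ T, 0 < θ t)
    (hθT : ∑ t ∈ T, θ t = 1) (hpθ : ∀ j, ∑ t ∈ T, θ t / p t j = 1 / ρ)
    (F : (Fin m → α) → ℝ≥0) :
    (∑ i, F i ^ ρ) ^ (1 / ρ) ≤ ∏ t ∈ T, mixedNorm (p t) F ^ θ t := by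
  have hc : ∀ t ∈ T, 0 < ρ * θ t := fun t ht => mul_pos hρ (hθ t ht)
  have hprod : ∀ i, ∏ t ∈ T, F i ^ (ρ * θ t) = F i ^ ρ := fun i => by
    rw [← NNReal.rpow_sum_of_nonneg _ fun t ht => (hc t ht).le, ← mul_sum, hθT, mul_one]
  have hnorm : ∏ t ∈ T, mixedNorm (fun j => p t j / (ρ * θ t)) (fun i => F i ^ (ρ * θ t)) =
      (∏ t ∈ T, mixedNorm (p t) F ^ θ t) ^ ρ := by
    rw [← NNReal.finsetProd_rpow]
    refine prod_congr rfl fun t ht => ?_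
    rw [mixedNorm_rpow _ _ (hc t ht).ne', mul_comm, NNReal.rpow_mul]
  have hexp : ∀ j, ∑ t ∈ T, 1 / (p t j / (ρ * θ t)) = 1 := fun j => by
    simp only [one_div_div, mul_div_assoc, ← mul_sum, hpθ, mul_one_div_cancel hρ.ne']
  have key := sum_prod_le_prod_mixedNorm T (fun t i => F i ^ (ρ * θ t)) _
    (fun t ht j => div_pos (hp t ht j) (hc t ht)) hexp
  rw [one_div, NNReal.rpow_inv_le_iff hρ, ← hnorm]
  simpa only [hprod] using key

end MixedNorm

namespace Fin

variable {α : Type*} {m : ℕ} (P : Fin (m + 1) → Prop)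

/-- The head is a function on the proposition `P 0`, so that the same map serves whether or not
`0` satisfies `P`. -/
def subtypeCons (x : P 0 → α) (g : {j : Fin m // P j.succ} → α) (j : {j // P j}) : α :=
  Fin.cases (motive := fun i => P i → α) x (fun i hi => g ⟨i, hi⟩) j.1 j.2

@[simps]
def subtypeConsEquiv (h0 : P 0) : α × ({j : Fin m // P j.succ} → α) ≃ ({j // P j} → α) where
  toFun xg := subtypeCons P (fun _ => xg.1) xg.2
  invFun g := (g ⟨0, h0⟩, fun j => g ⟨j.1.succ, j.2⟩)
  left_inv _ := rfl
  right_inv g := by funext ⟨j, hj⟩; cases j using Fin.cases <;> rfl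

@[simps]
def subtypeSuccEquiv (h0 : ¬P 0) : ({j : Fin m // P j.succ} → α) ≃ ({j // P j} → α) where
  toFun := subtypeCons P h0.elim
  invFun g j := g ⟨j.1.succ, j.2⟩
  left_inv _ := rfl
  right_inv g := by
    funext ⟨j, hj⟩
    cases j using Fin.cases
    · exact (h0 hj).elim
    · rfl

variable [DecidablePred P]

theorem dite_subtypeCons (x : P 0 → α) (y : ¬P 0 → α)
    (g : {j : Fin m // P j.succ} → α) (h : {j : Fin m // ¬P j.succ} → α) :
    (fun j => if hj : P j then subtypeCons P x g ⟨j, hj⟩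
      else subtypeCons (fun j => ¬P j) y h ⟨j, hj⟩) =
      Fin.cons (if h0 : P 0 then x h0 else y h0)
        (fun j => if hj : P j.succ then g ⟨j, hj⟩ else h ⟨j, hj⟩) := by
  funext j
  cases j using Fin.cases <;> simp only [cons_zero, cons_succ] <;> split_ifs <;> rfl

variable [Fintype α] {M N : Type*} [AddCommMonoid M] [AddCommMonoid N] (Ψ : M → N)
  (G : (Fin (m + 1) → α) → M)

theorem sum_sum_dite_of_pos (h0 : P 0) :
    ∑ g : {j // P j} → α, Ψ (∑ h : {j // ¬P j} → α,
      G (fun j => if hj : P j then g ⟨j, hj⟩ else h ⟨j, hj⟩)) =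
    ∑ a, ∑ g : {j : Fin m // P j.succ} → α, Ψ (∑ h : {j : Fin m // ¬P j.succ} → α,
      G (Fin.cons a fun j => if hj : P j.succ then g ⟨j, hj⟩ else h ⟨j, hj⟩)) := by
  rw [← Fintype.sum_prod_type']
  refine (Fintype.sum_equiv (subtypeConsEquiv P h0) _ _ fun ⟨a, g⟩ => ?_).symm
  congr 1
  refine Fintype.sum_equiv (subtypeSuccEquiv (fun j => ¬P j) (not_not_intro h0)) _ _ fun h => ?_
  simp only [subtypeConsEquiv_apply, subtypeSuccEquiv_apply]
  rw [dite_subtypeCons, dif_pos h0]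

theorem sum_sum_dite_of_neg (h0 : ¬P 0) :
    ∑ g : {j // P j} → α, Ψ (∑ h : {j // ¬P j} → α,
      G (fun j => if hj : P j then g ⟨j, hj⟩ else h ⟨j, hj⟩)) =
    ∑ g : {j : Fin m // P j.succ} → α, Ψ (∑ a, ∑ h : {j : Fin m // ¬P j.succ} → α,
      G (Fin.cons a fun j => if hj : P j.succ then g ⟨j, hj⟩ else h ⟨j, hj⟩)) := by
  refine (Fintype.sum_equiv (subtypeSuccEquiv P h0) _ _ fun g => ?_).symm
  congr 1
  rw [← Fintype.sum_prod_type']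
  refine Fintype.sum_equiv (subtypeConsEquiv (fun j => ¬P j) h0) _ _ fun ⟨a, h⟩ => ?_
  simp only [subtypeConsEquiv_apply, subtypeSuccEquiv_apply]
  rw [dite_subtypeCons, dif_neg h0]

end Fin

section Reordering

variable {α : Type*} [Fintype α] {s q : ℝ}

theorem mixedNorm_ite_rpow_le (hs : 0 < s) (hsq : s ≤ q) {m : ℕ} (P : Fin m → Prop)
    [DecidablePred P] (f : (Fin m → α) → ℝ≥0) :
    mixedNorm (fun j => if P j then s else q) f ^ s ≤
      ∑ g : {j // P j} → α, (∑ h : {j // ¬P j} → α,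
        f (fun j => if hj : P j then g ⟨j, hj⟩ else h ⟨j, hj⟩) ^ q) ^ (s / q) := by
  have hq : 0 < q := hs.trans_le hsq
  induction m with
  | zero =>
    simp only [mixedNorm, Fintype.sum_unique, ← NNReal.rpow_mul, mul_div_cancel₀ _ hq.ne']
    rw [Subsingleton.elim ![] _]
  | succ m ih =>
    set Q : Fin m → Prop := fun j => P j.succ
    set B : α → ({j // Q j} → α) → ℝ≥0 := fun a g => ∑ h : {j // ¬Q j} → α,
      f (Fin.cons a fun j => if hj : Q j then g ⟨j, hj⟩ else h ⟨j, hj⟩) ^ q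
    have ih' (a : α) := ih Q (fun i => f (Fin.cons a i))
    by_cases h0 : P 0
    · rw [Fin.sum_sum_dite_of_pos P (· ^ (s / q)) (f · ^ q) h0]
      calc mixedNorm (fun j => if P j then s else q) f ^ s
          = ∑ a, mixedNorm (fun j => if Q j then s else q) (fun i => f (Fin.cons a i)) ^ s := by
            rw [mixedNorm, if_pos h0, NNReal.rpow_self_rpow_inv hs.ne']
            rfl
        _ ≤ ∑ a, ∑ g, B a g ^ (s / q) := sum_le_sum fun a _ => ih' a
    · -- the `q`-sum over coordinate `0` is moved inside the outer `s`-sum by Minkowski in `ℓ^{q/s}`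
      rw [Fin.sum_sum_dite_of_neg P (· ^ (s / q)) (f · ^ q) h0]
      have hcancel : s / q * (q / s) = 1 := by field_simp
      calc mixedNorm (fun j => if P j then s else q) f ^ s
          = (∑ a, (mixedNorm (fun j => if Q j then s else q) (fun i => f (Fin.cons a i)) ^ s)
              ^ (q / s)) ^ (1 / (q / s)) := by
            rw [mixedNorm, if_neg h0, ← NNReal.rpow_mul, one_div_div, one_div_mul_eq_div]
            congr 1
            refine sum_congr rfl fun a _ => ?_
            rw [← NNReal.rpow_mul, mul_div_cancel₀ _ hs.ne']
            rfl
        _ ≤ (∑ a, (∑ g, B a g ^ (s / q)) ^ (q / s)) ^ (1 / (q / s)) := by gcongr; exact ih' _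
        _ ≤ ∑ g, (∑ a, (B a g ^ (s / q)) ^ (q / s)) ^ (1 / (q / s)) :=
          NNReal.Lp_sum_le_sum_Lp _ _ ((one_le_div hs).2 hsq)
        _ = ∑ g, (∑ a, B a g) ^ (s / q) := by
          simp only [← NNReal.rpow_mul, hcancel, NNReal.rpow_one, one_div_div]

theorem mixedNorm_ite_mem_le (hs : 0 < s) (hsq : s ≤ q) {m : ℕ} (S : Finset (Fin m))
    (f : (Fin m → α) → ℝ≥0) :
    mixedNorm (fun j => if j ∈ S then s else q) f ≤
      (∑ g : {x // x ∈ S} → α, (∑ h : {x // x ∈ Sᶜ} → α,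
        f (fun j => if hj : j ∈ S then g ⟨j, hj⟩ else h ⟨j, mem_compl.mpr hj⟩) ^ q) ^ (s / q)) ^
        (1 / s) := by
  rw [one_div, NNReal.le_rpow_inv_iff hs]
  refine (mixedNorm_ite_rpow_le hs hsq (· ∈ S) f).trans_eq
    (sum_congr (by ext; simp) fun g _ => ?_)
  congr 1
  exact Fintype.sum_equiv
    ((Equiv.subtypeEquivRight fun _ => mem_compl.symm).arrowCongr (Equiv.refl _)) _ _
    fun _ => rfl

end Reordering

theorem card_mul_card_filter_mem_powersetCard {ι : Type*} [Fintype ι] [DecidableEq ι] (k : ℕ)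
    (j : ι) :
    Fintype.card ι * #{S ∈ powersetCard k (univ : Finset ι) | j ∈ S} =
      k * (Fintype.card ι).choose k := by
  rcases k with _ | k
  · simp
  have hcard : #{S ∈ powersetCard (k + 1) (univ : Finset ι) | j ∈ S} =
      (Fintype.card ι - 1).choose k := by
    simpa [singleton_subset_iff] using
      card_filter_powersetCard_subset {j} univ (k + 1) (subset_univ _) (by simp)
  obtain ⟨n, hn⟩ := Nat.exists_eq_add_of_lt (Fintype.card_pos_iff.2 ⟨j⟩)
  rw [hcard, hn, zero_add, Nat.add_one_sub_one, Nat.add_one_mul_choose_eq, mul_comm]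

theorem sum_powersetCard_div_ite {ι : Type*} [Fintype ι] [DecidableEq ι] {k : ℕ}
    (hk : k ≤ Fintype.card ι) (j : ι) {s q : ℝ} (hs : s ≠ 0) (hq : q ≠ 0) :
    ∑ S ∈ powersetCard k (univ : Finset ι),
        1 / ((Fintype.card ι).choose k : ℝ) / (if j ∈ S then s else q) =
      (k * q + (Fintype.card ι - k) * s) / (Fintype.card ι * s * q) := by
  set n := Fintype.card ι
  set T := powersetCard k (univ : Finset ι)
  have hn : (n : ℝ) ≠ 0 := Nat.cast_ne_zero.2 (Fintype.card_pos_iff.2 ⟨j⟩).ne'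
  have hN : (n.choose k : ℝ) ≠ 0 := Nat.cast_ne_zero.2 (Nat.choose_pos hk).ne'
  have hcount : (n : ℝ) * #{S ∈ T | j ∈ S} = k * n.choose k := by
    exact_mod_cast card_mul_card_filter_mem_powersetCard k j
  have hsplit : (#{S ∈ T | j ∈ S} : ℝ) + #{S ∈ T | j ∉ S} = n.choose k := by
    have hT : #T = n.choose k := by rw [card_powersetCard, card_univ]
    exact_mod_cast hT ▸ card_filter_add_card_filter_not (s := T) (j ∈ ·)
  rw [sum_congr rfl fun S _ => div_ite .., sum_ite, sum_const, sum_const, nsmul_eq_mul,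
    nsmul_eq_mul]
  field_simp
  linear_combination (q - s) * hcount + s * n * hsplit

theorem mixed_holder_minkowski_corollary_general {𝕂 : Type*} [RCLike 𝕂] (m n : ℕ) (hm : 0 < m)
    (k : ℕ) (hkm : k ≤ m) (s q : ℝ) (hs : 1 ≤ s) (hsq : s ≤ q)
    (a : (Fin m → Fin n) → 𝕂) :
    (∑ i : Fin m → Fin n, ‖a i‖ ^ ((m : ℝ) * s * q / ((k : ℝ) * q + ((m : ℝ) - k) * s))) ^
        (((k : ℝ) * q + ((m : ℝ) - k) * s) / ((m : ℝ) * s * q)) ≤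
      ∏ S ∈ Finset.powersetCard k (Finset.univ : Finset (Fin m)),
        (∑ g : {x // x ∈ S} → Fin n,
            (∑ h : {x // x ∈ Sᶜ} → Fin n,
                ‖a (fun j => if hj : j ∈ S then g ⟨j, hj⟩
                    else h ⟨j, Finset.mem_compl.mpr hj⟩)‖ ^ q) ^ (s / q)) ^
          ((1 / s) * (1 / (m.choose k : ℝ))) := by
  have hs0 : 0 < s := one_pos.trans_le hs
  have hρ : 0 < (m : ℝ) * s * q / (k * q + (m - k) * s) := by
    have hm0 : (0 : ℝ) < m := Nat.cast_pos.2 hm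
    exact div_pos (mul_pos (mul_pos hm0 hs0) (hs0.trans_le hsq))
      (by nlinarith [mul_le_mul_of_nonneg_left hsq k.cast_nonneg])
  have hN : (0 : ℝ) < m.choose k := Nat.cast_pos.2 (Nat.choose_pos hkm)
  have hinterp := Lp_le_prod_mixedNorm_rpow (powersetCard k univ)
    (fun S j => if j ∈ S then s else q) (fun _ => 1 / (m.choose k : ℝ)) hρ
    (fun _ _ j => by split_ifs <;> linarith) (fun _ _ => by positivity)
    (by simp [card_powersetCard, hN.ne'])
    (fun j => by
      simpa [one_div_div] using sum_powersetCard_div_ite (by simpa using hkm) j hs0.ne'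
        (hs0.trans_le hsq).ne')
    (fun i => ‖a i‖₊)
  rw [← one_div_div ((m : ℝ) * s * q)]
  simp only [← coe_nnnorm, ← NNReal.coe_rpow, ← NNReal.coe_sum, ← NNReal.coe_prod,
    NNReal.coe_le_coe]
  refine hinterp.trans (prod_le_prod' fun S _ => ?_)
  rw [NNReal.rpow_mul]
  gcongr
  exact mixedNorm_ite_mem_le hs0 hsq S _

/-- Corollary of Hölder's inequality for mixed sums and Minkowski's inequality:
for `1 ≤ k ≤ m`, `1 ≤ s ≤ q` and `ρ = msq/(kq + (m-k)s)`,
`(Σ_{i ∈ M(m,n)} |a_i|^ρ)^{1/ρ} ≤ ∏_{S ∈ P_k(m)} (Σ_{i_S} (Σ_{i_Ŝ} |a_i|^q)^{s/q})^{(1/s)(1/C(m,k))}`,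
where the product runs over all subsets `S ⊆ {1,…,m}` of cardinality `k`, the outer sum over
the indices in `S` and the inner sum over the indices in the complement of `S`. -/
theorem mixed_holder_minkowski_corollary {𝕂 : Type*} [RCLike 𝕂] (m n : ℕ) (hm : 0 < m)
    (hn : 0 < n) (k : ℕ) (hk1 : 1 ≤ k) (hkm : k ≤ m) (s q : ℝ) (hs : 1 ≤ s) (hsq : s ≤ q)
    (a : (Fin m → Fin n) → 𝕂) :
    (∑ i : Fin m → Fin n, ‖a i‖ ^ ((m : ℝ) * s * q / ((k : ℝ) * q + ((m : ℝ) - k) * s))) ^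
        (((k : ℝ) * q + ((m : ℝ) - k) * s) / ((m : ℝ) * s * q)) ≤
      ∏ S ∈ Finset.powersetCard k (Finset.univ : Finset (Fin m)),
        (∑ g : {x // x ∈ S} → Fin n,
            (∑ h : {x // x ∈ Sᶜ} → Fin n,
                ‖a (fun j => if hj : j ∈ S then g ⟨j, hj⟩
                    else h ⟨j, Finset.mem_compl.mpr hj⟩)‖ ^ q) ^ (s / q)) ^
          ((1 / s) * (1 / (m.choose k : ℝ))) :=
  mixed_holder_minkowski_corollary_general m n hm k hkm s q hs hsq a
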